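/- arXiv:1009.3090 — 2 statements merged into one kernel-verified Lean document; each statement's English description precedes it below -/
import Mathlib

section
/- Let m be a positive integer, θ > 0, c ≥ 0, and let s be a real number with 0 ≤ s < 1. Then ∫_c^∞ (w - c)^{-s} w^{m-1} e^{-w/θ} dw = e^{-c/θ} · Σ_{ℓ=0}^{m-1} binom(m-1, ℓ) c^ℓ Γ(m - ℓ - s) θ^{m - ℓ - s}. -/
/-!
Substituting `w = t + c` and expanding `(t + c)^(m-1)` by the binomial theorem turns the integral
into a finite sum of Gamma integrals `∫_0^∞ t^(k-s) e^(-t/θ) dt = Γ(k+1-s) θ^(k+1-s)`.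
-/

open MeasureTheory Real Set

theorem integral_Ioi_comp_add_right {E : Type*} [NormedAddCommGroup E] [NormedSpace ℝ E]
    (f : ℝ → E) (a d : ℝ) : ∫ x in Ioi a, f (x + d) = ∫ x in Ioi (a + d), f x := by
  simpa only [preimage_add_const_Ioi, add_sub_cancel_right] using
    (measurePreserving_add_right volume d).setIntegral_preimage_emb
      (measurableEmbedding_addRight d) f (Ioi (a + d))

theorem integrableOn_rpow_mul_exp_neg_div_Ioi {b θ : ℝ} (hb : -1 < b) (hθ : 0 < θ) :
    IntegrableOn (fun t : ℝ => t ^ b * exp (-t / θ)) (Ioi 0) := by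
  refine (integrableOn_rpow_mul_exp_neg_mul_rpow hb one_pos (inv_pos.2 hθ)).congr_fun
    (fun t _ => ?_) measurableSet_Ioi
  simp only [rpow_one, div_eq_inv_mul, neg_mul, mul_neg]

theorem integral_rpow_mul_exp_neg_div_Ioi {b θ : ℝ} (hb : -1 < b) (hθ : 0 < θ) :
    ∫ t in Ioi (0 : ℝ), t ^ b * exp (-t / θ) = Gamma (b + 1) * θ ^ (b + 1) := by
  have h := integral_rpow_mul_exp_neg_mul_Ioi (by linarith : 0 < b + 1) (inv_pos.2 hθ)
  rw [add_sub_cancel_right, one_div, inv_inv] at h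
  simp_rw [neg_div, div_eq_inv_mul, h, mul_comm]

theorem rpow_neg_mul_add_pow_eq_sum {t : ℝ} (ht : 0 < t) (s c : ℝ) (n : ℕ) :
    t ^ (-s) * (t + c) ^ n =
      ∑ ℓ ∈ Finset.range (n + 1), (n.choose ℓ : ℝ) * c ^ ℓ * t ^ (((n - ℓ : ℕ) : ℝ) - s) := by
  rw [add_comm, add_pow, Finset.mul_sum]
  refine Finset.sum_congr rfl fun ℓ _ => ?_
  rw [sub_eq_neg_add, rpow_add ht, rpow_natCast]
  ring

theorem integral_rpow_neg_mul_add_pow_mul_exp_neg_div_Ioi (n : ℕ) {θ : ℝ} (hθ : 0 < θ) (c : ℝ)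
    {s : ℝ} (hs : s < 1) :
    ∫ t in Ioi (0 : ℝ), t ^ (-s) * (t + c) ^ n * exp (-t / θ) =
      ∑ ℓ ∈ Finset.range (n + 1), (n.choose ℓ : ℝ) * c ^ ℓ *
        Gamma (((n - ℓ : ℕ) : ℝ) + 1 - s) * θ ^ (((n - ℓ : ℕ) : ℝ) + 1 - s) := by
  have hb (ℓ : ℕ) : -1 < ((n - ℓ : ℕ) : ℝ) - s := by
    have := (n - ℓ).cast_nonneg (α := ℝ)
    linarith
  calc ∫ t in Ioi (0 : ℝ), t ^ (-s) * (t + c) ^ n * exp (-t / θ)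
      = ∫ t in Ioi (0 : ℝ), ∑ ℓ ∈ Finset.range (n + 1), (n.choose ℓ : ℝ) * c ^ ℓ *
          (t ^ (((n - ℓ : ℕ) : ℝ) - s) * exp (-t / θ)) := by
        refine setIntegral_congr_fun measurableSet_Ioi fun t ht => ?_
        simp only [rpow_neg_mul_add_pow_eq_sum ht, Finset.sum_mul, mul_assoc]
    _ = _ := by
        rw [integral_finsetSum _ fun ℓ _ =>
          (integrableOn_rpow_mul_exp_neg_div_Ioi (hb ℓ) hθ).const_mul _]
        refine Finset.sum_congr rfl fun ℓ _ => ?_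
        rw [integral_const_mul, integral_rpow_mul_exp_neg_div_Ioi (hb ℓ) hθ, sub_add_eq_add_sub]
        ring

theorem integral_rpow_mul_pow_mul_exp_general (m : ℕ) (hm : 0 < m) (θ : ℝ) (hθ : 0 < θ)
    (c : ℝ) (s : ℝ) (hs1 : s < 1) :
    ∫ w in Set.Ioi c, (w - c) ^ (-s) * w ^ (m - 1) * Real.exp (-w / θ) =
      Real.exp (-c / θ) *
        ∑ ℓ ∈ Finset.range m,
          (Nat.choose (m - 1) ℓ : ℝ) * c ^ ℓ * Real.Gamma ((m : ℝ) - ℓ - s) *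
            θ ^ ((m : ℝ) - ℓ - s) := by
  obtain ⟨n, rfl⟩ : ∃ n, m = n + 1 := ⟨m - 1, by omega⟩
  have hshift := integral_Ioi_comp_add_right
    (fun w => (w - c) ^ (-s) * w ^ n * exp (-w / θ)) 0 c
  rw [zero_add] at hshift
  have hexp (t : ℝ) : exp (-(t + c) / θ) = exp (-c / θ) * exp (-t / θ) := by
    rw [← exp_add]
    ring_nf
  simp only [add_sub_cancel_right, hexp, mul_left_comm _ (exp (-c / θ))] at hshift
  rw [Nat.add_sub_cancel, ← hshift, integral_const_mul,
    integral_rpow_neg_mul_add_pow_mul_exp_neg_div_Ioi n hθ c hs1]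
  congr 1
  refine Finset.sum_congr rfl fun ℓ hℓ => ?_
  have hcast : ((n - ℓ : ℕ) : ℝ) + 1 - s = ((n + 1 : ℕ) : ℝ) - ℓ - s := by
    rw [Nat.cast_sub (Nat.lt_succ_iff.mp (Finset.mem_range.mp hℓ))]
    push_cast
    ring
  rw [hcast]

/-- For a positive integer `m`, `θ > 0`, `c ≥ 0` and `0 ≤ s < 1`:
`∫_c^∞ (w - c)^{-s} w^{m-1} e^{-w/θ} dw
  = e^{-c/θ} Σ_{ℓ=0}^{m-1} binom(m-1, ℓ) c^ℓ Γ(m - ℓ - s) θ^{m - ℓ - s}`. -/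
theorem integral_rpow_mul_pow_mul_exp (m : ℕ) (hm : 0 < m) (θ : ℝ) (hθ : 0 < θ)
    (c : ℝ) (hc : 0 ≤ c) (s : ℝ) (hs0 : 0 ≤ s) (hs1 : s < 1) :
    ∫ w in Set.Ioi c, (w - c) ^ (-s) * w ^ (m - 1) * Real.exp (-w / θ) =
      Real.exp (-c / θ) *
        ∑ ℓ ∈ Finset.range m,
          (Nat.choose (m - 1) ℓ : ℝ) * c ^ ℓ * Real.Gamma ((m : ℝ) - ℓ - s) *
            θ ^ ((m : ℝ) - ℓ - s) :=
  integral_rpow_mul_pow_mul_exp_general m hm θ hθ c s hs1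
end

section
/- Fix α > 2. The function h(x) = (Γ(x - 1 + 2/α) / Γ(x - 1)) · (1 + 2x / (α (x - 1))) is strictly increasing on the interval (1, ∞). Consequently, for any right-hand-side constant C > 0, the equation (Γ(x - 1 + 2/α)/Γ(x - 1)) · (1 + 2x/(α(x-1))) = C has at most one solution x > 1, so the optimal number of data streams M^opt = min(max(⌊x⌋, 1), N) determined by this equation is unique. -/
/-!
Write `a = 2 / α` and `t = x - 1`. Since `Γ(t + 1) = t Γ(t)` and `Γ(t + a + 1) = (t + a) Γ(t + a)`,
the function equals `Γ(x + a) / Γ(x) · ((1 + a) x - 1) / (x - 1 + a)`. The first factor is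
nondecreasing because `log Γ` is convex, and the second one, `(1 + a) - a² / (x - 1 + a)`, is
strictly increasing; both are positive on `(1, ∞)`.
-/

open Real Set

theorem ConvexOn.map_add_sub_map_le {s : Set ℝ} {f : ℝ → ℝ} (hf : ConvexOn ℝ s f) {a x y : ℝ}
    (ha : 0 ≤ a) (hx : x ∈ s) (hya : y + a ∈ s) (hxy : x ≤ y) :
    f (x + a) - f x ≤ f (y + a) - f y := by
  rcases ha.eq_or_lt with rfl | ha
  · simp
  rcases hxy.eq_or_lt with rfl | hxy
  · rfl
  have mem : ∀ z ∈ Icc x (y + a), z ∈ s := fun z hz => hf.1.ordConnected.out hx hya hz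
  have hxa := mem (x + a) ⟨by linarith, by linarith⟩
  have hy := mem y ⟨hxy.le, by linarith⟩
  -- compare both secants with the one through `x` and `y + a`
  have left := hf.secant_mono hx hxa hya (by linarith) (by linarith) (by linarith : x + a ≤ y + a)
  have right := hf.secant_mono hya hx hy (by linarith) (by linarith) hxy.le
  rw [← neg_div_neg_eq, neg_sub, neg_sub] at right
  rw [add_sub_cancel_left] at left
  rw [show y - (y + a) = -a by ring, div_neg, ← neg_div, neg_sub] at right
  exact (div_le_div_iff_of_pos_right ha).mp (left.trans right)

theorem Real.monotoneOn_Gamma_add_div_Gamma {a : ℝ} (ha : 0 ≤ a) :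
    MonotoneOn (fun s => Gamma (s + a) / Gamma s) (Ioi 0) := by
  intro s (hs : 0 < s) s' (hs' : 0 < s') hss'
  have hlog : ∀ u, 0 < u → log (Gamma (u + a) / Gamma u) = log (Gamma (u + a)) - log (Gamma u) :=
    fun u hu => log_div (Gamma_pos_of_pos (by linarith)).ne' (Gamma_pos_of_pos hu).ne'
  rw [← log_le_log_iff (div_pos (Gamma_pos_of_pos (by linarith)) (Gamma_pos_of_pos hs))
    (div_pos (Gamma_pos_of_pos (by linarith)) (Gamma_pos_of_pos hs')), hlog s hs, hlog s' hs']
  exact convexOn_log_Gamma.map_add_sub_map_le ha hs (show 0 < s' + a by linarith) hss'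

theorem strictMonoOn_mul_sub_one_div_sub_one_add {a : ℝ} (ha : 0 < a) :
    StrictMonoOn (fun x => ((1 + a) * x - 1) / (x - 1 + a)) (Ioi (1 - a)) := by
  intro x (hx : 1 - a < x) y (hy : 1 - a < y) hxy
  rw [div_lt_div_iff₀ (by linarith) (by linarith)]
  nlinarith [mul_pos (pow_pos ha 2) (sub_pos.mpr hxy)]

theorem Gamma_sub_one_add_div_mul_eq {α x : ℝ} (hα : 0 < α) (hx : 1 < x) :
    Gamma (x - 1 + 2 / α) / Gamma (x - 1) * (1 + 2 * x / (α * (x - 1))) =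
      Gamma (x + 2 / α) / Gamma x * (((1 + 2 / α) * x - 1) / (x - 1 + 2 / α)) := by
  have hx1 : 0 < x - 1 := by linarith
  have hxa : 0 < x - 1 + 2 / α := by positivity
  have hΓa : Gamma (x + 2 / α) = (x - 1 + 2 / α) * Gamma (x - 1 + 2 / α) := by
    rw [← Gamma_add_one hxa.ne']; ring_nf
  have hΓ : Gamma x = (x - 1) * Gamma (x - 1) := by
    rw [← Gamma_add_one hx1.ne', sub_add_cancel]
  have hΓa₀ := (Gamma_pos_of_pos hxa).ne'
  have hΓ₀ := (Gamma_pos_of_pos hx1).ne'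
  rw [hΓa, hΓ]
  field_simp
  ring

/-- For `α > 2`, the function `h(x) = (Γ(x-1+2/α)/Γ(x-1)) (1 + 2x/(α(x-1)))` is strictly
increasing on `(1, ∞)`; consequently for any `C > 0` the equation `h(x) = C` has at most
one solution `x > 1`, so the throughput-optimal number of MRC data streams determined by
this equation is unique. -/
theorem mrc_stream_equation_strict_mono (α : ℝ) (hα : 2 < α) :
    StrictMonoOn
      (fun x : ℝ =>
        Real.Gamma (x - 1 + 2 / α) / Real.Gamma (x - 1) * (1 + 2 * x / (α * (x - 1))))
      (Ioi 1) ∧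
    ∀ C : ℝ, 0 < C → ∀ x ∈ Ioi (1 : ℝ), ∀ y ∈ Ioi (1 : ℝ),
      Real.Gamma (x - 1 + 2 / α) / Real.Gamma (x - 1) * (1 + 2 * x / (α * (x - 1))) = C →
      Real.Gamma (y - 1 + 2 / α) / Real.Gamma (y - 1) * (1 + 2 * y / (α * (y - 1))) = C →
      x = y := by
  have hα₀ : 0 < α := by linarith
  have ha : 0 < 2 / α := by positivity
  have hmono : StrictMonoOn
      (fun x : ℝ => Gamma (x - 1 + 2 / α) / Gamma (x - 1) * (1 + 2 * x / (α * (x - 1))))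
      (Ioi 1) := by
    intro x (hx : 1 < x) y (hy : 1 < y) hxy
    simp only [Gamma_sub_one_add_div_mul_eq hα₀ hx, Gamma_sub_one_add_div_mul_eq hα₀ hy]
    refine mul_lt_mul'
      (monotoneOn_Gamma_add_div_Gamma ha.le (mem_Ioi.2 (by linarith)) (mem_Ioi.2 (by linarith))
        hxy.le)
      (strictMonoOn_mul_sub_one_div_sub_one_add ha (mem_Ioi.2 (by linarith))
        (mem_Ioi.2 (by linarith)) hxy) ?_ ?_
    · exact div_nonneg (by nlinarith) (by linarith)
    · exact div_pos (Gamma_pos_of_pos (by linarith)) (Gamma_pos_of_pos (by linarith))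
  exact ⟨hmono, fun C _ x hx y hy hxC hyC => hmono.injOn hx hy (hxC.trans hyC.symm)⟩
end
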